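/- Let ℋ be a complex Hilbert space and T ∈ B(ℋ) a contraction (‖T‖ ≤ 1). Then there exists a bounded linear map P : B(ℋ) → B(ℋ) with ‖P‖ ≤ 1, P ∘ P = P, and range of P equal to {C ∈ B(ℋ) : T* C T = C}. -/

import Mathlib

/-!
Average the iterates `Φⁿ C = T*ⁿ C Tⁿ` of `Φ C = T* C T` against a Banach limit. The Banach limit
is the limit of Cesàro means along a free ultrafilter; it is shift-invariant because the Cesàro
means of `x (n + 1) - x n` telescope to `(x n - x 0) / n`. Applied to the matrix coefficients
`⟪x, Φⁿ C y⟫`, it yields a bounded sesquilinear form, hence (Riesz) an operator `P C` with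
`‖P C‖ ≤ ‖C‖`. As `Φ` passes through this weak limit, `Φ (P C)` is the average of the shifted
orbit, which is `P C` again; and if `Φ C = C` the orbit is constant, so `P C = C`. Thus `P` is a
contractive idempotent onto the fixed points of `Φ`.
-/

open Filter Topology BoundedContinuousFunction

noncomputable section

section CesaroMean

variable {V : Type*} [NormedAddCommGroup V] [NormedSpace ℝ V]

def cesaroMean (x : ℕ → V) (n : ℕ) : V := (n⁻¹ : ℝ) • ∑ i ∈ Finset.range n, x i

theorem norm_cesaroMean_le {x : ℕ → V} {M : ℝ} (hx : ∀ n, ‖x n‖ ≤ M) (n : ℕ) :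
    ‖cesaroMean x n‖ ≤ M := by
  rcases Nat.eq_zero_or_pos n with rfl | hn
  · simpa [cesaroMean] using (norm_nonneg _).trans (hx 0)
  have hn' : (0 : ℝ) < n := Nat.cast_pos.2 hn
  calc ‖cesaroMean x n‖ = (n : ℝ)⁻¹ * ‖∑ i ∈ Finset.range n, x i‖ := by
        rw [cesaroMean, norm_smul, Real.norm_of_nonneg (inv_nonneg.2 hn'.le)]
    _ ≤ (n : ℝ)⁻¹ * (n * M) := by
        gcongr
        simpa using norm_sum_le_of_le (Finset.range n) fun i _ => hx i
    _ = M := by field_simp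

theorem cesaroMean_add (x y : ℕ → V) : cesaroMean (x + y) = cesaroMean x + cesaroMean y := by
  ext n
  simp [cesaroMean, Finset.sum_add_distrib]

theorem cesaroMean_smul {R : Type*} [Monoid R] [DistribMulAction R V] [SMulCommClass ℝ R V]
    (c : R) (x : ℕ → V) : cesaroMean (c • x) = c • cesaroMean x := by
  ext n
  simp only [cesaroMean, Pi.smul_apply, ← Finset.smul_sum]
  exact smul_comm _ _ _

theorem tendsto_cesaroMean_succ_sub {x : ℕ → V} {M : ℝ} (hx : ∀ n, ‖x n‖ ≤ M) :
    Tendsto (cesaroMean fun n => x (n + 1) - x n) atTop (𝓝 0) := by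
  have telescope : cesaroMean (fun k => x (k + 1) - x k) =
      fun n : ℕ => (n⁻¹ : ℝ) • (x n - x 0) :=
    funext fun n => by simp only [cesaroMean, Finset.sum_range_sub]
  rw [telescope]
  refine squeeze_zero_norm (fun n => ?_) (tendsto_const_div_atTop_nhds_zero_nat (2 * M))
  rw [norm_smul, norm_inv, Real.norm_natCast, inv_mul_eq_div]
  gcongr
  calc ‖x n - x 0‖ ≤ ‖x n‖ + ‖x 0‖ := norm_sub_le _ _
    _ ≤ 2 * M := by linarith [hx n, hx 0]

end CesaroMean

theorem Ultrafilter.tendsto_limUnder_of_isCompact {α X : Type*} [TopologicalSpace X] [Nonempty X]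
    (𝒰 : Ultrafilter α) {K : Set X} (hK : IsCompact K) {u : α → X} (hu : ∀ a, u a ∈ K) :
    Tendsto u 𝒰 (𝓝 (limUnder 𝒰 u)) := by
  have hmap : (𝒰.map u : Filter X) ≤ 𝓟 K := by
    rw [Ultrafilter.coe_map, le_principal_iff]
    exact univ_mem' (f := (𝒰 : Filter α)) hu
  obtain ⟨a, -, ha⟩ := hK.ultrafilter_le_nhds (𝒰.map u) hmap
  exact tendsto_nhds_limUnder ⟨a, ha⟩

section BanachLimit

variable {𝕜 : Type*} [RCLike 𝕜]

theorem tendsto_hyperfilter_cesaroMean (x : ℕ →ᵇ 𝕜) :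
    Tendsto (cesaroMean x) (hyperfilter ℕ) (𝓝 (limUnder (hyperfilter ℕ) (cesaroMean x))) :=
  (hyperfilter ℕ).tendsto_limUnder_of_isCompact (isCompact_closedBall 0 ‖x‖) fun n =>
    mem_closedBall_zero_iff.2 (norm_cesaroMean_le x.norm_coe_le_norm n)

def banachLimit : (ℕ →ᵇ 𝕜) →L[𝕜] 𝕜 :=
  LinearMap.mkContinuous
    { toFun x := limUnder (hyperfilter ℕ) (cesaroMean x)
      map_add' x y := by
        refine tendsto_nhds_unique (tendsto_hyperfilter_cesaroMean (x + y)) ?_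
        rw [BoundedContinuousFunction.coe_add, cesaroMean_add]
        exact (tendsto_hyperfilter_cesaroMean x).add (tendsto_hyperfilter_cesaroMean y)
      map_smul' c x := by
        refine tendsto_nhds_unique (tendsto_hyperfilter_cesaroMean (c • x)) ?_
        change Tendsto (cesaroMean (c • ⇑x)) _ _
        rw [cesaroMean_smul, RingHom.id_apply]
        exact (tendsto_hyperfilter_cesaroMean x).const_smul c }
    1 fun x => by
      rw [one_mul]
      exact le_of_tendsto (tendsto_hyperfilter_cesaroMean x).norm
        (Eventually.of_forall (norm_cesaroMean_le x.norm_coe_le_norm))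

theorem norm_banachLimit_le : ‖(banachLimit : (ℕ →ᵇ 𝕜) →L[𝕜] 𝕜)‖ ≤ 1 :=
  LinearMap.mkContinuous_norm_le _ zero_le_one _

theorem norm_banachLimit_apply_le (x : ℕ →ᵇ 𝕜) : ‖banachLimit x‖ ≤ ‖x‖ :=
  (ContinuousLinearMap.le_of_opNorm_le _ norm_banachLimit_le x).trans_eq (one_mul _)

theorem banachLimit_eq_of_tendsto {x : ℕ →ᵇ 𝕜} {a : 𝕜}
    (h : Tendsto (cesaroMean x) atTop (𝓝 a)) : banachLimit x = a :=
  tendsto_nhds_unique (tendsto_hyperfilter_cesaroMean x)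
    (h.mono_left (Nat.cofinite_eq_atTop ▸ hyperfilter_le_cofinite))

theorem banachLimit_const (c : 𝕜) : banachLimit (const ℕ c) = c :=
  banachLimit_eq_of_tendsto tendsto_const_nhds.cesaro_smul

theorem banachLimit_eq_of_succ {x y : ℕ →ᵇ 𝕜} (h : ∀ n, y n = x (n + 1)) :
    banachLimit y = banachLimit x := by
  rw [← sub_eq_zero, ← map_sub]
  apply banachLimit_eq_of_tendsto
  convert tendsto_cesaroMean_succ_sub x.norm_coe_le_norm using 2
  ext n
  simp [h]

end BanachLimit

section WeakBanachLimit

open ContinuousLinearMap InnerProductSpace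
open scoped InnerProductSpace

variable {𝕜 E : Type*} [RCLike 𝕜] [NormedAddCommGroup E] [InnerProductSpace 𝕜 E]

def innerSeq (A : ℕ →ᵇ (E →L[𝕜] E)) (x y : E) : ℕ →ᵇ 𝕜 :=
  ((innerSL 𝕜 x).comp (apply 𝕜 E y)).compLeftContinuousBounded ℕ A

@[simp]
theorem innerSeq_apply (A : ℕ →ᵇ (E →L[𝕜] E)) (x y : E) (n : ℕ) :
    innerSeq A x y n = ⟪x, A n y⟫_𝕜 :=
  rfl

theorem innerSeq_add (A B : ℕ →ᵇ (E →L[𝕜] E)) (x y : E) :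
    innerSeq (A + B) x y = innerSeq A x y + innerSeq B x y :=
  map_add _ A B

theorem innerSeq_smul (c : 𝕜) (A : ℕ →ᵇ (E →L[𝕜] E)) (x y : E) :
    innerSeq (c • A) x y = c • innerSeq A x y :=
  map_smul _ c A

theorem norm_innerSeq_le (A : ℕ →ᵇ (E →L[𝕜] E)) (x y : E) :
    ‖innerSeq A x y‖ ≤ ‖A‖ * ‖x‖ * ‖y‖ :=
  (norm_le (by positivity)).2 fun n => calc
    ‖⟪x, A n y⟫_𝕜‖ ≤ ‖x‖ * (‖A n‖ * ‖y‖) :=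
        (norm_inner_le_norm _ _).trans (by gcongr; exact le_opNorm _ _)
    _ ≤ ‖A‖ * ‖x‖ * ‖y‖ := by
        rw [mul_left_comm, ← mul_assoc]
        gcongr
        exact A.norm_coe_le_norm n

def weakBanachLimitForm (A : ℕ →ᵇ (E →L[𝕜] E)) : E →L⋆[𝕜] E →L[𝕜] 𝕜 :=
  LinearMap.mkContinuous₂
    (LinearMap.mk₂'ₛₗ (starRingEnd 𝕜) (RingHom.id 𝕜) (fun x y => banachLimit (innerSeq A x y))
      (fun x x' y => by rw [← map_add]; congr 1; ext n; simp [inner_add_left])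
      (fun c x y => by rw [← map_smul]; congr 1; ext n; simp [inner_smul_left])
      (fun x y y' => by rw [← map_add]; congr 1; ext n; simp [inner_add_right])
      (fun c x y => by rw [← map_smul]; congr 1; ext n; simp [inner_smul_right]))
    ‖A‖ fun x y => (norm_banachLimit_apply_le _).trans (norm_innerSeq_le A x y)

@[simp]
theorem weakBanachLimitForm_apply (A : ℕ →ᵇ (E →L[𝕜] E)) (x y : E) :
    weakBanachLimitForm A x y = banachLimit (innerSeq A x y) :=
  rfl

theorem norm_weakBanachLimitForm_le (A : ℕ →ᵇ (E →L[𝕜] E)) : ‖weakBanachLimitForm A‖ ≤ ‖A‖ :=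
  LinearMap.mkContinuous₂_norm_le _ (norm_nonneg A) _

variable [CompleteSpace E]

theorem inner_adjoint_continuousLinearMapOfBilin (B : E →L⋆[𝕜] E →L[𝕜] 𝕜) (x y : E) :
    ⟪x, adjoint (continuousLinearMapOfBilin B) y⟫_𝕜 = B x y := by
  rw [adjoint_inner_right, continuousLinearMapOfBilin_apply]

theorem norm_continuousLinearMapOfBilin_le (B : E →L⋆[𝕜] E →L[𝕜] 𝕜) :
    ‖continuousLinearMapOfBilin B‖ ≤ ‖B‖ :=
  opNorm_le_bound _ (norm_nonneg B) fun v =>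
    ((toDual 𝕜 E).symm.norm_map (B v)).trans_le (le_opNorm B v)

/-- `continuousLinearMapOfBilin B` represents `B` as `⟪B♯ x, y⟫`; its adjoint gives the
representation `⟪x, weakBanachLimit A y⟫ = banachLimit (n ↦ ⟪x, A n y⟫)`. -/
def weakBanachLimit : (ℕ →ᵇ (E →L[𝕜] E)) →L[𝕜] (E →L[𝕜] E) :=
  LinearMap.mkContinuous
    { toFun (A : ℕ →ᵇ (E →L[𝕜] E)) := adjoint (continuousLinearMapOfBilin (weakBanachLimitForm A))
      map_add' A B := by
        refine ext fun y => ext_inner_left 𝕜 fun x => ?_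
        simp only [_root_.add_apply, inner_add_right,
          inner_adjoint_continuousLinearMapOfBilin, weakBanachLimitForm_apply, innerSeq_add,
          map_add]
      map_smul' c A := by
        refine ext fun y => ext_inner_left 𝕜 fun x => ?_
        simp only [_root_.smul_apply, inner_smul_right, RingHom.id_apply,
          inner_adjoint_continuousLinearMapOfBilin, weakBanachLimitForm_apply, innerSeq_smul,
          map_smul, smul_eq_mul] }
    1 fun A => by
      rw [one_mul, LinearMap.coe_mk, AddHom.coe_mk, LinearIsometryEquiv.norm_map]
      exact (norm_continuousLinearMapOfBilin_le _).trans (norm_weakBanachLimitForm_le A)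

theorem inner_weakBanachLimit (A : ℕ →ᵇ (E →L[𝕜] E)) (x y : E) :
    ⟪x, weakBanachLimit A y⟫_𝕜 = banachLimit (innerSeq A x y) :=
  inner_adjoint_continuousLinearMapOfBilin _ x y

theorem norm_weakBanachLimit_apply_le (A : ℕ →ᵇ (E →L[𝕜] E)) : ‖weakBanachLimit A‖ ≤ ‖A‖ :=
  (adjoint.norm_map (continuousLinearMapOfBilin (weakBanachLimitForm A))).trans_le
    ((norm_continuousLinearMapOfBilin_le _).trans (norm_weakBanachLimitForm_le A))

theorem weakBanachLimit_const (C : E →L[𝕜] E) : weakBanachLimit (const ℕ C) = C := by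
  refine ext fun y => ext_inner_left 𝕜 fun x => ?_
  rw [inner_weakBanachLimit, ← banachLimit_const ⟪x, C y⟫_𝕜]
  rfl

theorem weakBanachLimit_eq_of_succ {A B : ℕ →ᵇ (E →L[𝕜] E)} (h : ∀ n, B n = A (n + 1)) :
    weakBanachLimit B = weakBanachLimit A := by
  refine ext fun y => ext_inner_left 𝕜 fun x => ?_
  rw [inner_weakBanachLimit, inner_weakBanachLimit]
  exact banachLimit_eq_of_succ fun n => by simp [h]

theorem comp_weakBanachLimit_comp (S R : E →L[𝕜] E) {A B : ℕ →ᵇ (E →L[𝕜] E)}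
    (h : ∀ n, B n = S ∘L A n ∘L R) : S ∘L weakBanachLimit A ∘L R = weakBanachLimit B := by
  refine ext fun y => ext_inner_left 𝕜 fun x => ?_
  change ⟪x, S (weakBanachLimit A (R y))⟫_𝕜 = _
  rw [← adjoint_inner_left, inner_weakBanachLimit, inner_weakBanachLimit]
  congr 1
  ext n
  simp [h, adjoint_inner_left]

end WeakBanachLimit

section Orbit

variable {𝕜 V : Type*} [NontriviallyNormedField 𝕜] [NormedAddCommGroup V] [NormedSpace 𝕜 V]

theorem norm_pow_apply_le {Φ : V →L[𝕜] V} (hΦ : ‖Φ‖ ≤ 1) (v : V) (n : ℕ) : ‖(Φ ^ n) v‖ ≤ ‖v‖ := by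
  induction n with
  | zero => simp
  | succ n ih =>
    rw [pow_succ', mul_apply_eq_comp]
    exact (Φ.le_of_opNorm_le hΦ _).trans (by rwa [one_mul])

def orbit (Φ : V →L[𝕜] V) (hΦ : ‖Φ‖ ≤ 1) : V →L[𝕜] (ℕ →ᵇ V) :=
  LinearMap.mkContinuous
    { toFun v := .ofNormedAddCommGroup (fun n => (Φ ^ n) v) continuous_of_discreteTopology ‖v‖
        (norm_pow_apply_le hΦ v)
      map_add' v w := by ext n; simp
      map_smul' c v := by ext n; simp }
    1 fun v => (norm_ofNormedAddCommGroup_le _ (norm_nonneg v) (norm_pow_apply_le hΦ v)).trans_eq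
      (one_mul _).symm

@[simp]
theorem orbit_apply (Φ : V →L[𝕜] V) (hΦ : ‖Φ‖ ≤ 1) (v : V) (n : ℕ) : orbit Φ hΦ v n = (Φ ^ n) v :=
  rfl

theorem norm_orbit_apply_le (Φ : V →L[𝕜] V) (hΦ : ‖Φ‖ ≤ 1) (v : V) : ‖orbit Φ hΦ v‖ ≤ ‖v‖ :=
  norm_ofNormedAddCommGroup_le _ (norm_nonneg v) (norm_pow_apply_le hΦ v)

end Orbit

section FixedPointProjection

open ContinuousLinearMap

variable {𝕜 E : Type*} [RCLike 𝕜] [NormedAddCommGroup E] [InnerProductSpace 𝕜 E] [CompleteSpace E]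

def adjointConj (T : E →L[𝕜] E) : (E →L[𝕜] E) →L[𝕜] (E →L[𝕜] E) :=
  (mul 𝕜 _ (adjoint T)).comp ((mul 𝕜 _).flip T)

theorem adjointConj_apply (T C : E →L[𝕜] E) : adjointConj T C = (adjoint T).comp (C.comp T) :=
  rfl

theorem norm_adjointConj_le {T : E →L[𝕜] E} (hT : ‖T‖ ≤ 1) : ‖adjointConj T‖ ≤ 1 := by
  refine opNorm_le_bound _ zero_le_one fun C => ?_
  rw [adjointConj_apply, one_mul]
  calc ‖(adjoint T).comp (C.comp T)‖ ≤ ‖adjoint T‖ * (‖C‖ * ‖T‖) :=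
        (opNorm_comp_le _ _).trans (by gcongr; exact opNorm_comp_le _ _)
    _ ≤ 1 * (‖C‖ * 1) := by gcongr; rwa [adjoint.norm_map]
    _ = ‖C‖ := by ring

theorem adjointConj_weakBanachLimit (T : E →L[𝕜] E) {A B : ℕ →ᵇ (E →L[𝕜] E)}
    (h : ∀ n, B n = adjointConj T (A n)) : adjointConj T (weakBanachLimit A) = weakBanachLimit B :=
  comp_weakBanachLimit_comp (adjoint T) T h

def fixedPointProjection (T : E →L[𝕜] E) (hT : ‖T‖ ≤ 1) : (E →L[𝕜] E) →L[𝕜] (E →L[𝕜] E) :=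
  weakBanachLimit ∘L orbit (adjointConj T) (norm_adjointConj_le hT)

variable {T : E →L[𝕜] E} (hT : ‖T‖ ≤ 1)

theorem norm_fixedPointProjection_le : ‖fixedPointProjection T hT‖ ≤ 1 :=
  opNorm_le_bound _ zero_le_one fun C =>
    ((norm_weakBanachLimit_apply_le _).trans (norm_orbit_apply_le _ _ C)).trans_eq (one_mul _).symm

theorem adjointConj_fixedPointProjection (C : E →L[𝕜] E) :
    adjointConj T (fixedPointProjection T hT C) = fixedPointProjection T hT C := by
  let orb := orbit (adjointConj T) (norm_adjointConj_le hT)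
  calc adjointConj T (weakBanachLimit (orb C)) = weakBanachLimit (orb (adjointConj T C)) :=
        adjointConj_weakBanachLimit T fun n => by
          simp only [orb, orbit_apply, ← mul_apply_eq_comp, ← pow_succ, pow_succ']
    _ = weakBanachLimit (orb C) :=
        weakBanachLimit_eq_of_succ fun n => by
          simp only [orb, orbit_apply, pow_succ, mul_apply_eq_comp]

theorem fixedPointProjection_eq_self {C : E →L[𝕜] E} (hC : adjointConj T C = C) :
    fixedPointProjection T hT C = C := by
  have hpow : ∀ n, (adjointConj T ^ n) C = C := fun n => by
    induction n with
    | zero => rfl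
    | succ n ih => rw [pow_succ, mul_apply_eq_comp, hC, ih]
  have horbit : orbit (adjointConj T) (norm_adjointConj_le hT) C = const ℕ C := ext hpow
  exact (congrArg weakBanachLimit horbit).trans (weakBanachLimit_const C)

end FixedPointProjection

open ContinuousLinearMap in
/-- For a contraction `T` on a Hilbert space there is a contractive idempotent
on `B(H)` whose range is `{C : T* C T = C}`. -/
theorem stmt_6 {H : Type*}
    [NormedAddCommGroup H] [InnerProductSpace ℂ H] [CompleteSpace H]
    (T : H →L[ℂ] H) (hT : ‖T‖ ≤ 1) :
    ∃ P : (H →L[ℂ] H) →L[ℂ] (H →L[ℂ] H),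
      ‖P‖ ≤ 1 ∧ P.comp P = P ∧
      Set.range ⇑P =
        {C : H →L[ℂ] H | (adjoint T).comp (C.comp T) = C} := by
  refine ⟨fixedPointProjection T hT, norm_fixedPointProjection_le hT, ?_, ?_⟩
  · ext1 C
    rw [ContinuousLinearMap.comp_apply]
    exact fixedPointProjection_eq_self hT (adjointConj_fixedPointProjection hT C)
  · ext C
    simp only [Set.mem_range, Set.mem_ofPred_eq, ← adjointConj_apply]
    constructor
    · rintro ⟨B, rfl⟩
      exact adjointConj_fixedPointProjection hT B
    · exact fun hC => ⟨C, fixedPointProjection_eq_self hT hC⟩
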